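/- arXiv:1412.0550 — 4 statements merged into one kernel-verified Lean document; each statement's English description precedes it below -/
import Mathlib

section
/- Let F : ℝᵈ ⇉ ℝˢ be a set-valued mapping with (x̄, ȳ) ∈ gph F. If F has the isolated calmness property at (x̄, ȳ), then the graphical derivative of F at (x̄, ȳ) applied to 0 contains only 0, i.e., DF(x̄, ȳ)(0) = {0}. -/
open Filter Topology Set
noncomputable section

/-- Contingent (Bouligand tangent) cone. -/
def contingentCone {E : Type*} [NormedAddCommGroup E] [NormedSpace ℝ E]
    (Ω : Set E) (z : E) : Set E :=
  {d | ∃ (t : ℕ → ℝ) (w : ℕ → E), (∀ n, 0 < t n) ∧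
    Tendsto t atTop (nhds 0) ∧ Tendsto w atTop (nhds d) ∧ ∀ n, z + t n • w n ∈ Ω}

/-- Graph of a set-valued mapping. -/
def gph {E F : Type*} (Φ : E → Set F) : Set (E × F) := {p | p.2 ∈ Φ p.1}

/-- Isolated calmness of `F` at `(xb, yb) ∈ gph F`. -/
def IsolatedCalm {E F : Type*} [NormedAddCommGroup E] [NormedAddCommGroup F]
    (Φ : E → Set F) (xb : E) (yb : F) : Prop :=
  ∃ U ∈ nhds xb, ∃ V ∈ nhds yb, ∃ ℓ : ℝ, 0 < ℓ ∧
    ∀ x ∈ U, ∀ y ∈ Φ x, y ∈ V → ‖y - yb‖ ≤ ℓ * ‖x - xb‖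

/-- isolated calmness implies `DF(xb, yb)(0) = {0}`. -/
theorem isolatedCalm_implies_graphDer_zero {d s : ℕ}
    (Φ : EuclideanSpace ℝ (Fin d) → Set (EuclideanSpace ℝ (Fin s)))
    (xb : EuclideanSpace ℝ (Fin d)) (yb : EuclideanSpace ℝ (Fin s)) (hxy : yb ∈ Φ xb)
    (hic : IsolatedCalm Φ xb yb) :
    {v | ((0 : EuclideanSpace ℝ (Fin d)), v) ∈ contingentCone (gph Φ) (xb, yb)} = {0} := by
  ext v
  simp only [Set.mem_setOf_eq, Set.mem_singleton_iff]
  constructor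
  · rintro ⟨t, w, htpos, ht0, hw, hmem⟩
    obtain ⟨U, hU, V, hV, ℓ, hℓ, hcalm⟩ := hic
    have hw1 : Tendsto (fun n => (w n).1) atTop (nhds (0 : EuclideanSpace ℝ (Fin d))) :=
      (continuous_fst.tendsto _).comp hw
    have hw2 : Tendsto (fun n => (w n).2) atTop (nhds v) :=
      (continuous_snd.tendsto _).comp hw
    have hx : Tendsto (fun n => xb + t n • (w n).1) atTop (nhds xb) := by
      have : Tendsto (fun n => t n • (w n).1) atTop (nhds ((0:ℝ) • (0 : EuclideanSpace ℝ (Fin d)))) :=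
        ht0.smul hw1
      simpa using tendsto_const_nhds.add this
    have hy : Tendsto (fun n => yb + t n • (w n).2) atTop (nhds yb) := by
      have : Tendsto (fun n => t n • (w n).2) atTop (nhds ((0:ℝ) • v)) := ht0.smul hw2
      simpa using tendsto_const_nhds.add this
    have hev : ∀ᶠ n in atTop, ‖(w n).2‖ ≤ ℓ * ‖(w n).1‖ := by
      filter_upwards [hx.eventually_mem hU, hy.eventually_mem hV] with n hxU hyV
      have hmn := hmem n
      simp only [gph, Set.mem_setOf_eq, Prod.fst_add, Prod.snd_add, Prod.smul_fst,
        Prod.smul_snd] at hmn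
      have := hcalm _ hxU _ hmn hyV
      simp only [add_sub_cancel_left, norm_smul, Real.norm_eq_abs,
        abs_of_pos (htpos n)] at this
      have htn := htpos n
      rw [mul_left_comm] at this
      exact le_of_mul_le_mul_left this htn
    have hlim1 : Tendsto (fun n => ‖(w n).2‖) atTop (nhds ‖v‖) := hw2.norm
    have hlim2 : Tendsto (fun n => ℓ * ‖(w n).1‖) atTop (nhds (ℓ * ‖(0 : EuclideanSpace ℝ (Fin d))‖)) :=
      hw1.norm.const_mul ℓ
    have hle : ‖v‖ ≤ ℓ * ‖(0 : EuclideanSpace ℝ (Fin d))‖ :=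
      le_of_tendsto_of_tendsto hlim1 hlim2 hev
    rw [norm_zero, mul_zero] at hle
    exact norm_le_zero_iff.mp hle
  · rintro rfl
    exact ⟨fun n => 1 / (n + 1), fun _ => 0, fun n => by positivity,
      tendsto_one_div_add_atTop_nhds_zero_nat, tendsto_const_nhds,
      fun n => by simpa [gph] using hxy⟩
end
end

section
/- Let F : ℝᵈ ⇉ ℝˢ be a set-valued mapping whose graph is locally closed at (x̄, ȳ) ∈ gph F. If DF(x̄, ȳ)(0) = {0}, then F has the isolated calmness property at (x̄, ȳ). -/
/-!
If isolated calmness fails, there are graph points `(xₙ, yₙ) → (x̄, ȳ)` with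
`‖xₙ - x̄‖ / ‖yₙ - ȳ‖ → 0`. Rescaling by `‖yₙ - ȳ‖`, the second components lie on the unit
sphere, so a subsequence converges to a unit vector `v`, and `(0, v)` is a contingent direction
of the graph; this contradicts `DF(x̄, ȳ)(0) = {0}`.
-/

open Filter Topology Set
noncomputable section

theorem mem_contingentCone_of_tendsto {E : Type*} [NormedAddCommGroup E] [NormedSpace ℝ E]
    {Ω : Set E} {z d : E} {t : ℕ → ℝ} {zₙ : ℕ → E} (ht : ∀ n, 0 < t n)
    (ht₀ : Tendsto t atTop (𝓝 0)) (hz : ∀ n, zₙ n ∈ Ω)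
    (hd : Tendsto (fun n => (t n)⁻¹ • (zₙ n - z)) atTop (𝓝 d)) :
    d ∈ contingentCone Ω z :=
  ⟨t, _, ht, ht₀, hd, fun n => by simpa [smul_inv_smul₀ (ht n).ne'] using hz n⟩

section

variable {E F : Type*} [NormedAddCommGroup E] [NormedAddCommGroup F]
  {Φ : E → Set F} {xb : E} {yb : F}

theorem exists_mem_gph_of_not_isolatedCalm (h : ¬IsolatedCalm Φ xb yb) {ε ℓ : ℝ}
    (hε : 0 < ε) (hℓ : 0 < ℓ) :
    ∃ p ∈ gph Φ, ‖p.2 - yb‖ < ε ∧ ℓ * ‖p.1 - xb‖ < ‖p.2 - yb‖ := by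
  by_contra! hc
  refine h ⟨univ, univ_mem, Metric.ball yb ε, Metric.ball_mem_nhds _ hε, ℓ, hℓ, ?_⟩
  intro x _ y hy hyV
  exact hc (x, y) hy (by simpa [dist_eq_norm] using hyV)

theorem exists_seq_of_not_isolatedCalm (h : ¬IsolatedCalm Φ xb yb) :
    ∃ p : ℕ → E × F, (∀ n, p n ∈ gph Φ) ∧ (∀ n, 0 < ‖(p n).2 - yb‖) ∧
      Tendsto (fun n => ‖(p n).2 - yb‖) atTop (𝓝 0) ∧
      Tendsto (fun n => ‖(p n).1 - xb‖ / ‖(p n).2 - yb‖) atTop (𝓝 0) := by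
  choose p hp hy hlt using fun n : ℕ =>
    exists_mem_gph_of_not_isolatedCalm h (Nat.one_div_pos_of_nat (n := n)) n.cast_add_one_pos
  have hpos : ∀ n, 0 < ‖(p n).2 - yb‖ := fun n =>
    lt_of_le_of_lt (by positivity) (hlt n)
  refine ⟨p, hp, hpos, squeeze_zero (fun n => (hpos n).le) (fun n => (hy n).le)
    tendsto_one_div_add_atTop_nhds_zero_nat,
    squeeze_zero (fun n => by positivity) (fun n => ?_) tendsto_one_div_add_atTop_nhds_zero_nat⟩
  rw [div_le_div_iff₀ (hpos n) n.cast_add_one_pos, one_mul, mul_comm]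
  exact (hlt n).le

end

theorem exists_norm_eq_one_zero_mem_contingentCone {E F : Type*} [NormedAddCommGroup E]
    [NormedSpace ℝ E] [NormedAddCommGroup F] [NormedSpace ℝ F] [ProperSpace F]
    {Ω : Set (E × F)} {xb : E} {yb : F} {p : ℕ → E × F} (hp : ∀ n, p n ∈ Ω)
    (hpos : ∀ n, 0 < ‖(p n).2 - yb‖) (hy : Tendsto (fun n => ‖(p n).2 - yb‖) atTop (𝓝 0))
    (hratio : Tendsto (fun n => ‖(p n).1 - xb‖ / ‖(p n).2 - yb‖) atTop (𝓝 0)) :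
    ∃ v : F, ‖v‖ = 1 ∧ (0, v) ∈ contingentCone Ω (xb, yb) := by
  set t := fun n => ‖(p n).2 - yb‖
  have hsphere : ∀ n, (t n)⁻¹ • ((p n).2 - yb) ∈ Metric.sphere (0 : F) 1 := fun n => by
    simp [t, norm_smul, inv_mul_cancel₀ (hpos n).ne']
  obtain ⟨v, hv, φ, hφ, hv_lim⟩ := (isCompact_sphere (0 : F) 1).tendsto_subseq hsphere
  have hx_lim : Tendsto (fun n => (t n)⁻¹ • ((p n).1 - xb)) atTop (𝓝 0) := by
    refine tendsto_zero_iff_norm_tendsto_zero.2 (hratio.congr fun n => ?_)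
    rw [norm_smul, norm_inv, norm_norm, inv_mul_eq_div]
  refine ⟨v, by simpa using hv, mem_contingentCone_of_tendsto (t := t ∘ φ) (zₙ := p ∘ φ)
    (fun n => hpos (φ n)) (hy.comp hφ.tendsto_atTop) (fun n => hp (φ n)) ?_⟩
  exact (hx_lim.comp hφ.tendsto_atTop).prodMk_nhds hv_lim

theorem graphDer_zero_implies_isolatedCalm_general {d s : ℕ}
    (Φ : EuclideanSpace ℝ (Fin d) → Set (EuclideanSpace ℝ (Fin s)))
    (xb : EuclideanSpace ℝ (Fin d)) (yb : EuclideanSpace ℝ (Fin s))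
    (hder : {v | ((0 : EuclideanSpace ℝ (Fin d)), v) ∈ contingentCone (gph Φ) (xb, yb)} = {0}) :
    IsolatedCalm Φ xb yb := by
  by_contra h
  obtain ⟨p, hp, hpos, hy, hratio⟩ := exists_seq_of_not_isolatedCalm h
  obtain ⟨v, hv, hv_mem⟩ := exists_norm_eq_one_zero_mem_contingentCone hp hpos hy hratio
  have hv₀ : v = 0 := by
    simpa [hder] using (show v ∈ {v | (0, v) ∈ contingentCone (gph Φ) (xb, yb)} from hv_mem)
  simp [hv₀] at hv

/-- if `gph F` is locally closed at `(xb, yb)` and `DF(xb, yb)(0) = {0}`,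
then `F` has the isolated calmness property at `(xb, yb)`. -/
theorem graphDer_zero_implies_isolatedCalm {d s : ℕ}
    (Φ : EuclideanSpace ℝ (Fin d) → Set (EuclideanSpace ℝ (Fin s)))
    (xb : EuclideanSpace ℝ (Fin d)) (yb : EuclideanSpace ℝ (Fin s)) (hxy : yb ∈ Φ xb)
    (hloc : ∃ ε : ℝ, 0 < ε ∧ IsClosed (gph Φ ∩ Metric.closedBall (xb, yb) ε))
    (hder : {v | ((0 : EuclideanSpace ℝ (Fin d)), v) ∈ contingentCone (gph Φ) (xb, yb)} = {0}) :
    IsolatedCalm Φ xb yb :=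
  graphDer_zero_implies_isolatedCalm_general Φ xb yb hder
end
end

section
/- Let Θ = {t·q : t ≥ 0, q ∈ Ξ} ⊆ ℝ³ where Ξ = {(1, z₂, z₃) : z₂⁴ ≤ z₃ ≤ 1}, and let z̄ = (1, 0, 0) ∈ Θ. Then the normal cone of convex analysis to Θ at z̄ is N_Θ(z̄) = {0} × {0} × ℝ₋. -/
open Filter Topology Set RealInnerProductSpace
noncomputable section

/-- Normal cone of convex analysis. -/
def normalCone {E : Type*} [NormedAddCommGroup E] [InnerProductSpace ℝ E]
    (Ω : Set E) (z : E) : Set E :=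
  {v | ∀ w ∈ Ω, ⟪v, w - z⟫ ≤ 0}

/-- The generator set `Ξ = {(1, z₂, z₃) : z₂⁴ ≤ z₃ ≤ 1}`. -/
def Xi : Set (EuclideanSpace ℝ (Fin 3)) :=
  {z | z 0 = 1 ∧ (z 1) ^ 4 ≤ z 2 ∧ z 2 ≤ 1}

/-- The cone generated by `Ξ`. -/
def Th : Set (EuclideanSpace ℝ (Fin 3)) :=
  {z | ∃ t : ℝ, 0 ≤ t ∧ ∃ q ∈ Xi, z = t • q}

/-! Testing the normal-cone inequality against the generators `t • (1, a, b)` reduces it to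
`v₀ (t - 1) + v₁ t a + v₂ t b ≤ 0` for `t ≥ 0`, `a⁴ ≤ b ≤ 1`. Varying `t` gives `v₀ = 0`, and
`b = 1` gives `v₂ ≤ 0`. On the boundary curve `b = a⁴` the inequality becomes `v₁ a + v₂ a⁴ ≤ 0`
for both signs of small `a`; since `a⁴ = o(a)` this forces `v₁ = 0`. -/

lemma nonpos_of_eventually_mul_le_mul_pow {c d : ℝ} {n : ℕ} (hn : 0 < n)
    (h : ∀ᶠ ε in 𝓝[>] 0, c * ε ≤ d * ε ^ (n + 1)) : c ≤ 0 := by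
  have hlim : Tendsto (fun ε : ℝ => d * ε ^ n) (𝓝[>] 0) (𝓝 0) := by
    have : Tendsto (fun ε : ℝ => d * ε ^ n) (𝓝 0) (𝓝 (d * 0 ^ n)) :=
      (continuous_const.mul (continuous_pow n)).tendsto 0
    simpa [zero_pow hn.ne'] using this.mono_left nhdsWithin_le_nhds
  refine ge_of_tendsto hlim ?_
  filter_upwards [h, self_mem_nhdsWithin] with ε hε (hε0 : 0 < ε)
  rw [pow_succ, ← mul_assoc] at hε
  exact le_of_mul_le_mul_right hε hε0

lemma forall_quartic_cone_ineq_iff (x y z : ℝ) :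
    (∀ t a b : ℝ, 0 ≤ t → a ^ 4 ≤ b → b ≤ 1 → x * (t - 1) + y * (t * a) + z * (t * b) ≤ 0) ↔
      x = 0 ∧ y = 0 ∧ z ≤ 0 := by
  constructor
  · intro h
    have hx : x = 0 := by
      linarith [h 0 0 0 le_rfl (by norm_num) zero_le_one, h 2 0 0 zero_le_two (by norm_num) zero_le_one]
    have hz : z ≤ 0 := by simpa using h 1 0 1 zero_le_one (by norm_num) le_rfl
    have hcurve : ∀ a : ℝ, a ^ 4 ≤ 1 → y * a + z * a ^ 4 ≤ 0 := fun a ha => by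
      simpa [hx] using h 1 a (a ^ 4) zero_le_one le_rfl ha
    have hsmall : ∀ᶠ ε in 𝓝[>] (0 : ℝ), ε ^ 4 ≤ 1 := by
      filter_upwards [Ioo_mem_nhdsGT zero_lt_one] with ε ⟨hε0, hε1⟩
      exact pow_le_one₀ hε0.le hε1.le
    have hy_le : y ≤ 0 := nonpos_of_eventually_mul_le_mul_pow (d := -z) (n := 3) three_pos <| by
      filter_upwards [hsmall] with ε hε
      show y * ε ≤ -z * ε ^ 4
      linarith [hcurve ε hε]
    have hy_ge : -y ≤ 0 := nonpos_of_eventually_mul_le_mul_pow (d := -z) (n := 3) three_pos <| by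
      filter_upwards [hsmall] with ε hε
      have := hcurve (-ε) (by rwa [Even.neg_pow (by decide)])
      rw [Even.neg_pow (by decide)] at this
      show -y * ε ≤ -z * ε ^ 4
      linarith
    exact ⟨hx, by linarith, hz⟩
  · rintro ⟨rfl, rfl, hz⟩ t a b ht hab -
    have hb : 0 ≤ b := (by positivity : 0 ≤ a ^ 4).trans hab
    nlinarith [mul_nonneg ht hb]

lemma vec3_mem_Xi {a b : ℝ} (hab : a ^ 4 ≤ b) (hb : b ≤ 1) :
    (!₂[1, a, b] : EuclideanSpace ℝ (Fin 3)) ∈ Xi := by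
  simpa [Xi] using ⟨hab, hb⟩

lemma eq_vec3_of_mem_Xi {q : EuclideanSpace ℝ (Fin 3)} (hq : q ∈ Xi) :
    q = !₂[1, q 1, q 2] := by
  ext i
  fin_cases i <;> simp [hq.1]

lemma mem_Th_iff {w : EuclideanSpace ℝ (Fin 3)} :
    w ∈ Th ↔ ∃ t a b : ℝ, 0 ≤ t ∧ a ^ 4 ≤ b ∧ b ≤ 1 ∧ w = t • !₂[1, a, b] := by
  constructor
  · rintro ⟨t, ht, q, hq, rfl⟩
    exact ⟨t, q 1, q 2, ht, hq.2.1, hq.2.2, by rw [← eq_vec3_of_mem_Xi hq]⟩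
  · rintro ⟨t, a, b, ht, hab, hb, rfl⟩
    exact ⟨t, ht, _, vec3_mem_Xi hab hb, rfl⟩

lemma inner_smul_vec3_sub (v : EuclideanSpace ℝ (Fin 3)) (t a b : ℝ) :
    ⟪v, t • !₂[1, a, b] - !₂[1, 0, 0]⟫ = v 0 * (t - 1) + v 1 * (t * a) + v 2 * (t * b) := by
  simp only [PiLp.inner_apply, PiLp.sub_apply, PiLp.smul_apply, smul_eq_mul, RCLike.inner_apply,
    conj_trivial, Fin.sum_univ_three, Matrix.cons_val_zero, Matrix.cons_val_one, Matrix.cons_val]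
  ring

lemma mem_normalCone_Th_iff {v : EuclideanSpace ℝ (Fin 3)} :
    v ∈ normalCone Th !₂[1, 0, 0] ↔ ∀ t a b : ℝ, 0 ≤ t → a ^ 4 ≤ b → b ≤ 1 →
      v 0 * (t - 1) + v 1 * (t * a) + v 2 * (t * b) ≤ 0 := by
  simp only [normalCone, mem_ofPred_eq, mem_Th_iff]
  constructor
  · intro h t a b ht hab hb
    rw [← inner_smul_vec3_sub]
    exact h _ ⟨t, a, b, ht, hab, hb, rfl⟩
  · rintro h _ ⟨t, a, b, ht, hab, hb, rfl⟩
    rw [inner_smul_vec3_sub]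
    exact h t a b ht hab hb

/-- `N_Θ((1,0,0)) = {0} × {0} × ℝ₋`. -/
theorem normalCone_Th (zb : EuclideanSpace ℝ (Fin 3)) (hzb : zb = !₂[1, 0, 0]) :
    normalCone Th zb = {v | v 0 = 0 ∧ v 1 = 0 ∧ v 2 ≤ 0} := by
  subst hzb
  ext v
  rw [mem_normalCone_Th_iff, forall_quartic_cone_ineq_iff]
  rfl
end
end

section
/- Let Ω ⊆ ℝˢ be a closed convex set with metric projection P_Ω, and suppose P_Ω is directionally differentiable at a point u ∈ ℝˢ with z̄ = P_Ω(u). Then for every direction h ∈ ℝˢ, the directional derivative satisfies P'_Ω(u; h) ∈ K(z̄, u − z̄) := T_Ω(z̄) ∩ {u − z̄}^⊥; i.e., directional derivatives of the projection lie in the critical cone. -/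
/-!
Write `z = P u` and `z_t = P (u + t • h)`. The variational inequality of the projection, applied
at `u` and at `u + t • h`, squeezes `⟪u - z, z_t - z⟫` between `-t ⟪h, z_t - z⟫` and `0`. After
division by `t`, both bounds on `⟪u - z, (z_t - z) / t⟫` tend to `0`, so the limit `v` of the
difference quotients is orthogonal to `u - z`; it is tangent because `z + t • ((z_t - z) / t) ∈ Ω`.
-/

open Filter Topology Set RealInnerProductSpace
noncomputable section

section

variable {E : Type*} [NormedAddCommGroup E]

theorem mem_contingentCone_of_tendsto_slope [NormedSpace ℝ E] {Ω : Set E} {z v : E}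
    {g : ℝ → E} (hg : ∀ t > 0, g t ∈ Ω)
    (hv : Tendsto (fun t : ℝ => t⁻¹ • (g t - z)) (𝓝[>] 0) (𝓝 v)) :
    v ∈ contingentCone Ω z := by
  have hpos (n : ℕ) : (0 : ℝ) < 1 / (n + 1) := by positivity
  have hseq : Tendsto (fun n : ℕ => (1 : ℝ) / (n + 1)) atTop (𝓝[>] 0) :=
    tendsto_nhdsWithin_of_tendsto_nhds_of_eventually_within _
      tendsto_one_div_add_atTop_nhds_zero_nat (Eventually.of_forall hpos)
  refine ⟨_, _, hpos, tendsto_nhdsWithin_iff.1 hseq |>.1, hv.comp hseq, fun n => ?_⟩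
  rw [Function.comp_apply, smul_inv_smul₀ (hpos n).ne', add_sub_cancel]
  exact hg _ (hpos n)

variable [InnerProductSpace ℝ E] {Ω : Set E} {P : E → E}

theorem inner_sub_le_zero_of_forall_dist_le (hconv : Convex ℝ Ω) {x z : E} (hz : z ∈ Ω)
    (hmin : ∀ w ∈ Ω, dist x z ≤ dist x w) : ∀ w ∈ Ω, ⟪x - z, w - z⟫ ≤ 0 := by
  rw [← norm_eq_iInf_iff_real_inner_le_zero hconv hz]
  have : Nonempty Ω := ⟨⟨z, hz⟩⟩
  refine le_antisymm (le_ciInf fun w => ?_)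
    (ciInf_le (f := fun w : Ω => ‖x - (w : E)‖) ⟨0, ?_⟩ ⟨z, hz⟩)
  · simpa only [dist_eq_norm] using hmin w w.2
  · rintro _ ⟨w, rfl⟩
    exact norm_nonneg _

variable (hconv : Convex ℝ Ω) (hP : ∀ x, P x ∈ Ω ∧ ∀ w ∈ Ω, dist x (P x) ≤ dist x w)
include hconv hP

theorem inner_sub_proj_proj_sub_proj_nonpos (x y : E) : ⟪x - P x, P y - P x⟫ ≤ 0 :=
  inner_sub_le_zero_of_forall_dist_le hconv (hP x).1 (hP x).2 _ (hP y).1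

theorem neg_inner_le_inner_sub_proj_proj_sub_proj (x y : E) :
    -⟪y - x, P y - P x⟫ ≤ ⟪x - P x, P y - P x⟫ := by
  have hy := inner_sub_proj_proj_sub_proj_nonpos hconv hP y x
  have hsplit : y - P y = (x - P x) + (y - x) - (P y - P x) := by abel
  rw [hsplit, ← neg_sub (P y), inner_neg_right, inner_sub_left, inner_add_left,
    real_inner_self_eq_norm_sq] at hy
  nlinarith [sq_nonneg ‖P y - P x‖]

theorem inner_sub_proj_slope_mem_Icc (x h : E) {t : ℝ} (ht : 0 < t) :
    ⟪x - P x, t⁻¹ • (P (x + t • h) - P x)⟫ ∈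
      Icc (-(t * ⟪h, t⁻¹ • (P (x + t • h) - P x)⟫)) 0 := by
  have hlow := neg_inner_le_inner_sub_proj_proj_sub_proj hconv hP x (x + t • h)
  have hup := inner_sub_proj_proj_sub_proj_nonpos hconv hP x (x + t • h)
  rw [add_sub_cancel_left, real_inner_smul_left] at hlow
  simp only [real_inner_smul_right, ← mul_assoc, mul_inv_cancel₀ ht.ne', one_mul]
  refine ⟨?_, mul_nonpos_of_nonneg_of_nonpos (inv_pos.2 ht).le hup⟩
  rw [le_inv_mul_iff₀ ht]
  linarith

end

theorem projection_directional_derivative_in_criticalCone_general {s : ℕ}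
    (Ω : Set (EuclideanSpace ℝ (Fin s)))
    (hconv : Convex ℝ Ω)
    (P : EuclideanSpace ℝ (Fin s) → EuclideanSpace ℝ (Fin s))
    (hP : ∀ x, P x ∈ Ω ∧ ∀ w ∈ Ω, dist x (P x) ≤ dist x w)
    (u : EuclideanSpace ℝ (Fin s)) (zb : EuclideanSpace ℝ (Fin s)) (hzb : zb = P u) :
    ∀ (h v : EuclideanSpace ℝ (Fin s)),
      Tendsto (fun t : ℝ => t⁻¹ • (P (u + t • h) - P u)) (nhdsWithin 0 (Set.Ioi 0)) (nhds v) →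
      v ∈ contingentCone Ω zb ∧ ⟪u - zb, v⟫ = 0 := by
  intro h v hv
  subst hzb
  set q := fun t : ℝ => t⁻¹ • (P (u + t • h) - P u)
  have hbounds : ∀ᶠ t in 𝓝[>] (0 : ℝ), ⟪u - P u, q t⟫ ∈ Icc (-(t * ⟪h, q t⟫)) 0 :=
    eventually_nhdsWithin_of_forall fun t ht => inner_sub_proj_slope_mem_Icc hconv hP u h ht
  have hinner := (tendsto_const_nhds (x := u - P u)).inner (𝕜 := ℝ) hv
  have hlow : Tendsto (fun t : ℝ => -(t * ⟪h, q t⟫)) (𝓝[>] 0) (𝓝 0) := by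
    simpa using ((tendsto_id.mono_left nhdsWithin_le_nhds).mul
      ((tendsto_const_nhds (x := h)).inner (𝕜 := ℝ) hv)).neg
  refine ⟨mem_contingentCone_of_tendsto_slope (fun t _ => (hP _).1) hv, le_antisymm ?_ ?_⟩
  · exact le_of_tendsto hinner (hbounds.mono fun _ ht => ht.2)
  · exact le_of_tendsto_of_tendsto hlow hinner (hbounds.mono fun _ ht => ht.1)

/-- directional derivatives of the metric projection onto a closed convex
set lie in the critical cone `K(zb, u − zb) = T_Ω(zb) ∩ {u − zb}ᗮ`. -/
theorem projection_directional_derivative_in_criticalCone {s : ℕ}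
    (Ω : Set (EuclideanSpace ℝ (Fin s))) (hne : Ω.Nonempty)
    (hclosed : IsClosed Ω) (hconv : Convex ℝ Ω)
    (P : EuclideanSpace ℝ (Fin s) → EuclideanSpace ℝ (Fin s))
    (hP : ∀ x, P x ∈ Ω ∧ ∀ w ∈ Ω, dist x (P x) ≤ dist x w)
    (u : EuclideanSpace ℝ (Fin s)) (zb : EuclideanSpace ℝ (Fin s)) (hzb : zb = P u) :
    ∀ (h v : EuclideanSpace ℝ (Fin s)),
      Tendsto (fun t : ℝ => t⁻¹ • (P (u + t • h) - P u)) (nhdsWithin 0 (Set.Ioi 0)) (nhds v) →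
      v ∈ contingentCone Ω zb ∧ ⟪u - zb, v⟫ = 0 :=
  projection_directional_derivative_in_criticalCone_general Ω hconv P hP u zb hzb
end
end
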